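/- Let R be a governed stuttering bisimulation and 𝒰 a set of R-equivalence classes not containing [v]_R. If every successor of v lies in ⋃𝒰, then for every u ∈ [v]_R, every successor of u outside [v]_R lies in ⋃𝒰. -/
import Mathlib


universe u

/-- A parity game: a directed graph with a total edge relation, a priority
function and an owner function (`true` = player even, `false` = player odd). -/
structure ParityGame (V : Type u) where
  edge : V → V → Prop
  total : ∀ v, ∃ w, edge v w
  prio : V → ℕ
  owner : V → Bool

namespace ParityGame

variable {V : Type u}

/-- A (history-dependent) strategy: given the history of previously visited
vertices and the current vertex, choose a successor.  Only the values at
vertices owned by the given player matter. -/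
abbrev Strategy (V : Type u) : Type u := List V → V → V

variable (G : ParityGame V)

/-- A strategy is valid for player `i` if it always proposes edges. -/
def ValidStrategy (i : Bool) (σ : Strategy V) : Prop :=
  ∀ h v, G.owner v = i → G.edge v (σ h v)

/-- A memoryless strategy only depends on the current vertex. -/
def Memoryless (σ : Strategy V) : Prop := ∀ h h' v, σ h v = σ h' v

/-- An (infinite) play is an infinite path in the game graph. -/
def IsPlay (p : ℕ → V) : Prop := ∀ n, G.edge (p n) (p (n + 1))

/-- The history of a play before position `n`. -/
def hist (p : ℕ → V) (n : ℕ) : List V := List.ofFn (fun k : Fin n => p k)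

/-- A play is consistent with a strategy `σ` of player `i` if at every vertex
owned by `i` the play follows `σ`. -/
def Consistent (i : Bool) (σ : Strategy V) (p : ℕ → V) : Prop :=
  ∀ n, G.owner (p n) = i → p (n + 1) = σ (hist p n) (p n)

/-- `G.ForcesVia i σ v U T`: every play from `v` consistent with `σ` reaches
`T`, all earlier vertices lying in `U`. -/
def ForcesVia (i : Bool) (σ : Strategy V) (v : V) (U T : Set V) : Prop :=
  ∀ p : ℕ → V, G.IsPlay p → G.Consistent i σ p → p 0 = v →
    ∃ n, p n ∈ T ∧ ∀ j < n, p j ∈ U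

/-- `v ⇒_{i,U} T`: player `i` has a memoryless strategy forcing every
consistent play from `v` to reach `T` while staying in `U` beforehand. -/
def Forces (i : Bool) (v : V) (U T : Set V) : Prop :=
  ∃ σ : Strategy V, G.ValidStrategy i σ ∧ Memoryless σ ∧ G.ForcesVia i σ v U T

/-- Every play from `v` consistent with `σ` stays in `U` forever. -/
def DivergesVia (i : Bool) (σ : Strategy V) (v : V) (U : Set V) : Prop :=
  ∀ p : ℕ → V, G.IsPlay p → G.Consistent i σ p → p 0 = v → ∀ n, p n ∈ U

/-- `v ⇒^ω_{i,U}`: player `i` has a memoryless strategy keeping all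
consistent plays from `v` forever inside `U`. -/
def Diverges (i : Bool) (v : V) (U : Set V) : Prop :=
  ∃ σ : Strategy V, G.ValidStrategy i σ ∧ Memoryless σ ∧ G.DivergesVia i σ v U

/-- Priority `k` occurs infinitely often on the play `p`. -/
def InfOften (p : ℕ → V) (k : ℕ) : Prop := ∀ N, ∃ n, N ≤ n ∧ G.prio (p n) = k

/-- Player even wins a play iff the least priority occurring infinitely often
is even. -/
def EvenWinsPlay (p : ℕ → V) : Prop := Even (sInf {k | G.InfOften p k})

/-- Player `i` wins the play `p`. -/
def WinsPlay (i : Bool) (p : ℕ → V) : Prop := G.EvenWinsPlay p ↔ i = true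

/-- `σ` is a winning strategy for player `i` from `v`. -/
def WinningFrom (i : Bool) (σ : Strategy V) (v : V) : Prop :=
  ∀ p : ℕ → V, G.IsPlay p → G.Consistent i σ p → p 0 = v → G.WinsPlay i p

end ParityGame

namespace ParityGame

/-- The `R`-class of `v`. -/
def cls {V : Type u} (R : V → V → Prop) (v : V) : Set V := {x | R v x}

variable {V : Type u} (G : ParityGame V)

/-- Governed stuttering bisimulations. -/
def IsGSB (R : V → V → Prop) : Prop :=
  Equivalence R ∧ ∀ v w, R v w →
    G.prio v = G.prio w ∧
    (∀ u, ¬ R v u → (∃ v', G.edge v v' ∧ R u v') →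
      G.Forces (G.owner v) w (cls R w) (cls R u)) ∧
    (∀ i : Bool, G.Diverges i v (cls R v) → G.Diverges i w (cls R w))

end ParityGame

/-- If all successors of `v` lie in the union of a set `𝒰` of `R`-classes not
containing `[v]_R`, then every successor outside `[v]_R` of every `u ∈ [v]_R`
lies in `⋃𝒰`. -/
theorem gsb_exits_gen {V : Type u} [Fintype V] (G : ParityGame V)
    (R : V → V → Prop) (hR : G.IsGSB R) (v : V) (𝒰 : Set (Set V))
    (hcls : ∀ C ∈ 𝒰, ∃ u, C = ParityGame.cls R u)
    (hnotin : ParityGame.cls R v ∉ 𝒰)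
    (hsucc : ∀ v', G.edge v v' → v' ∈ ⋃₀ 𝒰) :
    ∀ u, R v u → ∀ u', G.edge u u' → ¬ R v u' → u' ∈ ⋃₀ 𝒰 := by
  intro u huv u' hedge hnot
  obtain ⟨heq, hmain⟩ := hR
  have hnuu' : ¬ R u u' := fun h => hnot (heq.trans huv h)
  have hforces : G.Forces (G.owner u) v (ParityGame.cls R v) (ParityGame.cls R u') :=
    (hmain u v (heq.symm huv)).2.1 u' hnuu' ⟨u', hedge, heq.refl u'⟩
  obtain ⟨σ, hval, hmem, hforce⟩ := hforces
  set i := G.owner u with hi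
  classical
  let f : V → V := fun x => if G.owner x = i then σ [] x else Classical.choose (G.total x)
  have hf : ∀ x, G.edge x (f x) := by
    intro x
    by_cases hx : G.owner x = i
    · simpa [f, hx] using hval [] x hx
    · simpa [f, hx] using Classical.choose_spec (G.total x)
  let p : ℕ → V := fun n => f^[n] v
  have hstep : ∀ n, p (n + 1) = f (p n) := by
    intro n; simp [p, Function.iterate_succ_apply']
  have hplay : G.IsPlay p := by
    intro n; rw [hstep]; exact hf (p n)
  have hcons : G.Consistent i σ p := by
    intro n hn
    rw [hstep]
    simp only [f, hn, if_true]
    exact hmem [] (ParityGame.hist p n) (p n)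
  obtain ⟨n, hT, hU⟩ := hforce p hplay hcons rfl
  have hp1 : G.edge v (p 1) := by
    have := hplay 0; simpa [p] using this
  obtain ⟨C, hC𝒰, hp1C⟩ := hsucc _ hp1
  obtain ⟨w, rfl⟩ := hcls C hC𝒰
  have hp1notv : ¬ R v (p 1) := by
    intro hvp
    apply hnotin
    have : ParityGame.cls R v = ParityGame.cls R w := by
      ext x
      constructor
      · intro hx; exact heq.trans hp1C (heq.trans (heq.symm hvp) hx)
      · intro hx; exact heq.trans hvp (heq.trans (heq.symm hp1C) hx)
    rw [this]; exact hC𝒰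
  rcases n with _ | _ | m
  · exact absurd (heq.symm hT) hnot
  · exact ⟨ParityGame.cls R w, hC𝒰, heq.trans hp1C (heq.symm hT)⟩
  · exact absurd (hU 1 (by omega)) hp1notv
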